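/- arXiv:1402.4112 — 2 statements merged into one kernel-verified Lean document; each statement's English description precedes it below -/
import Mathlib

section
/- For every finite nonempty alphabet A, every finite coloring of the set W(A) of finite words over A admits an infinite sequence (t_n(x))_{n=0}^∞ of variable words over A such that for every n ∈ ℕ, every choice of indices m_0 < m_1 < ⋯ < m_n, and every choice of letters a_0, a_1, …, a_n ∈ A, the concatenated words t_{m_0}(a_0) t_{m_1}(a_1) ⋯ t_{m_n}(a_n) all receive the same color. -/
/- Words over an alphabet are `List α`.  The variable symbol `x` is modelled by
`none : Option α`, and variable words are lists over `Option α` containing `none`. -/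

namespace HJ

variable {α : Type*}

/-- Substitution of the letter `a` for every occurrence of the variable in a
variable word, producing a constant word. -/
def substC (s : List (Option α)) (a : α) : List α :=
  s.map (fun b => b.getD a)

/-- Substitution of `b ∈ A ∪ {x}` (a letter `some a` or the variable `none`)
for every occurrence of the variable. -/
def substV (s : List (Option α)) (b : Option α) : List (Option α) :=
  s.map (fun c => Option.elim c b some)

/-- `s` is a variable word over the alphabet `S`: all its letters lie in `S`
and it contains at least one occurrence of the variable. -/
def IsVarWord (S : Set α) (s : List (Option α)) : Prop :=
  (∀ a : α, some a ∈ s → a ∈ S) ∧ none ∈ s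

/-- `W(S)`: the set of (constant) words over the alphabet `S`. -/
def WordsOver (S : Set α) : Set (List α) :=
  { w | ∀ a ∈ w, a ∈ S }

/-- The constant span of the sequence `s` of variable words, with indices
restricted to `I` and the letter substituted at position `l i` taken from the
alphabet `B (l i)`: all concatenations `s_{l_0}(a_0) ⋯ s_{l_n}(a_n)` with
`l_0 < ⋯ < l_n` in `I` and `a_i ∈ B (l_i)`. -/
def constSpan (B : ℕ → Set α) (s : ℕ → List (Option α)) (I : Set ℕ) :
    Set (List α) :=
  { w | ∃ (n : ℕ) (l : Fin (n + 1) → ℕ) (a : Fin (n + 1) → α),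
      StrictMono l ∧ (∀ i, l i ∈ I) ∧ (∀ i, a i ∈ B (l i)) ∧
      w = (List.ofFn fun i => substC (s (l i)) (a i)).flatten }

/-- The variable span of the sequence `s` of variable words, with indices
restricted to `I` and alphabets given by `B`: all concatenations
`s_{l_0}(b_0) ⋯ s_{l_n}(b_n)` with `l_0 < ⋯ < l_n` in `I` and
`b_i ∈ B (l_i) ∪ {x}` which contain at least one occurrence of the variable. -/
def varSpan (B : ℕ → Set α) (s : ℕ → List (Option α)) (I : Set ℕ) :
    Set (List (Option α)) :=
  { w | ∃ (n : ℕ) (l : Fin (n + 1) → ℕ) (b : Fin (n + 1) → Option α),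
      StrictMono l ∧ (∀ i, l i ∈ I) ∧
      (∀ i, ∀ a : α, b i = some a → a ∈ B (l i)) ∧
      none ∈ w ∧
      w = (List.ofFn fun i => substV (s (l i)) (b i)).flatten }

/-- `(t_0, …, t_l)` is a finite extracted subsequence of `s` (with alphabets `B`):
there are `0 = m_0 < m_1 < ⋯` with `t_i` in the variable span of
`(s_n)_{n = m_i}^{m_{i+1} - 1}` (with alphabets `B`) for all `i ≤ l`. -/
def ExtractedFin (B : ℕ → Set α) (s t : ℕ → List (Option α)) (l : ℕ) : Prop :=
  ∃ m : ℕ → ℕ, m 0 = 0 ∧ StrictMono m ∧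
    ∀ i ≤ l, t i ∈ varSpan B s (Set.Ico (m i) (m (i + 1)))

/-- `t` is an infinite extracted subsequence of `s` (with alphabets `B`). -/
def Extracted (B : ℕ → Set α) (s t : ℕ → List (Option α)) : Prop :=
  ∀ l : ℕ, ExtractedFin B s t l

/-- `E` is large in `s` (with alphabets `B`): `E` meets the constant span of
every infinite extracted subsequence of `s`. -/
def IsLarge (B : ℕ → Set α) (E : Set (List α)) (s : ℕ → List (Option α)) : Prop :=
  ∀ w : ℕ → List (Option α), Extracted B s w →
    (E ∩ constSpan B w Set.univ).Nonempty

/-- `E_F = {z ∈ W(S) : w ++ z ∈ E for every w ∈ F}`. -/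
def wordQuot (S : Set α) (E F : Set (List α)) : Set (List α) :=
  { z | z ∈ WordsOver S ∧ ∀ w ∈ F, w ++ z ∈ E }

end HJ

/-!
Concatenation makes the ultrafilters on words over `A ∪ {x}` a compact right-topological
semigroup. Take a minimal idempotent `q` among those concentrated on constant words, and an
idempotent `p ≤ q` concentrated on variable words. Each substitution `x ↦ a` is a homomorphism
fixing `q`, so it sends `p` to an idempotent below `q` concentrated on constant words, which by
minimality is `q` itself. Given a colour class `D ∈ q`, the variable words `t n` can then be
picked one after another from `p`, as in the Galvin–Glazer proof of Hindman's theorem, so that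
every ordered concatenation of substitution instances stays in `D`.
-/

open Filter Set

section CompactRightTopologicalSemigroup

variable {M : Type*} [Semigroup M] [TopologicalSpace M] [T2Space M]

theorem exists_minimal_closed_left_ideal (hmul : ∀ r : M, Continuous (· * r)) {Q : Set M}
    (hQ : IsCompact Q) (hQne : Q.Nonempty) (hQmul : ∀ x ∈ Q, ∀ y ∈ Q, x * y ∈ Q) :
    ∃ L ⊆ Q, L.Nonempty ∧ IsClosed L ∧ (∀ x ∈ Q, ∀ l ∈ L, x * l ∈ L) ∧
      ∀ l ∈ L, (· * l) '' Q = L := by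
  let S : Set (Set M) :=
    {L | L ⊆ Q ∧ L.Nonempty ∧ IsClosed L ∧ ∀ x ∈ Q, ∀ l ∈ L, x * l ∈ L}
  obtain ⟨L, -, ⟨hLQ, hLne, hLcl, hLid⟩, hLmin⟩ :
      ∃ L, L ⊆ Q ∧ Minimal (· ∈ S) L := by
    refine zorn_superset_nonempty S (fun c hcS hchain hcne => ?_) Q
      ⟨Subset.rfl, hQne, hQ.isClosed, hQmul⟩
    obtain ⟨L₀, hL₀⟩ := hcne
    refine ⟨⋂₀ c, ⟨(sInter_subset_of_mem hL₀).trans (hcS hL₀).1, ?_,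
      isClosed_sInter fun U hU => (hcS hU).2.2.1, fun x hx l hl =>
        mem_sInter.2 fun U hU => (hcS hU).2.2.2 x hx l (mem_sInter.1 hl U hU)⟩,
      fun _ => sInter_subset_of_mem⟩
    have : Nonempty c := ⟨⟨L₀, hL₀⟩⟩
    exact IsCompact.nonempty_sInter_of_directed_nonempty_isCompact_isClosed
      (IsChain.directedOn (r := fun s t : Set M => s ⊇ t) hchain.symm) (fun U hU => (hcS hU).2.1)
      (fun U hU => hQ.of_isClosed_subset (hcS hU).2.2.1 (hcS hU).1)
      (fun U hU => (hcS hU).2.2.1)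
  refine ⟨L, hLQ, hLne, hLcl, hLid, fun l hl => ?_⟩
  have hsub : (· * l) '' Q ⊆ L := by
    rintro _ ⟨x, hx, rfl⟩
    exact hLid x hx l hl
  refine subset_antisymm hsub (hLmin ⟨hsub.trans hLQ, hQne.image _,
    (hQ.image (hmul l)).isClosed, ?_⟩ hsub)
  rintro x hx _ ⟨y, hy, rfl⟩
  exact ⟨x * y, hQmul x hx y hy, mul_assoc x y l⟩

theorem exists_minimal_idempotent (hmul : ∀ r : M, Continuous (· * r)) {Q : Set M}
    (hQ : IsCompact Q) (hQne : Q.Nonempty) (hQmul : ∀ x ∈ Q, ∀ y ∈ Q, x * y ∈ Q) :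
    ∃ q ∈ Q, q * q = q ∧ ∀ u ∈ Q, u * u = u → u * q = u → q * u = u → u = q := by
  obtain ⟨L, hLQ, hLne, hLcl, hLid, hLmin⟩ := exists_minimal_closed_left_ideal hmul hQ hQne hQmul
  obtain ⟨q, hqL, hqq⟩ := exists_idempotent_in_compact_subsemigroup hmul L hLne
    (hQ.of_isClosed_subset hLcl hLQ) fun x hx y hy => hLid x (hLQ hx) y hy
  refine ⟨q, hLQ hqL, hqq, fun u hu huu huq hqu => ?_⟩
  have huL : u ∈ L := huq ▸ hLid u hu q hqL
  obtain ⟨w, -, hwu⟩ : q ∈ (· * u) '' Q := (hLmin u huL).symm ▸ hqL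
  calc u = q * u := hqu.symm
    _ = q := by rw [← hwu, mul_assoc, huu]

theorem exists_idempotent_le (hmul : ∀ r : M, Continuous (· * r)) {X Y : Set M}
    (hY : IsCompact Y) (hYne : Y.Nonempty) (hYsub : Y ⊆ X)
    (hXY : ∀ x ∈ X, ∀ y ∈ Y, x * y ∈ Y) (hYX : ∀ y ∈ Y, ∀ x ∈ X, y * x ∈ Y)
    {q : M} (hqX : q ∈ X) (hqq : q * q = q) :
    ∃ p ∈ Y, p * p = p ∧ p * q = p ∧ q * p = p := by
  have hYq : ∀ y ∈ Y, y * q ∈ Y := fun y hy => hYX y hy q hqX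
  obtain ⟨_, ⟨y, hy, rfl⟩, hu⟩ := exists_idempotent_in_compact_subsemigroup hmul
    ((· * q) '' Y) (hYne.image _) (hY.image (hmul q)) <| by
      rintro _ ⟨y, hy, rfl⟩ _ ⟨y', hy', rfl⟩
      exact ⟨y * q * y', hXY _ (hYsub (hYq y hy)) y' hy', by simp only [mul_assoc]⟩
  have huq : y * q * q = y * q := by rw [mul_assoc, hqq]
  refine ⟨q * (y * q), hXY q hqX _ (hYq y hy), ?_, ?_, ?_⟩
  · calc q * (y * q) * (q * (y * q)) = q * (y * q * q * (y * q)) := by simp only [mul_assoc]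
      _ = q * (y * q) := by rw [huq, hu]
  · rw [mul_assoc, huq]
  · rw [← mul_assoc, hqq]

end CompactRightTopologicalSemigroup

namespace Ultrafilter

attribute [local instance] Ultrafilter.mul Ultrafilter.semigroup

variable {M N ι : Type*}

theorem mem_mul_of_forall_mul_mem [Mul M] {u v : Ultrafilter M} {s t r : Set M}
    (hs : s ∈ u) (ht : t ∈ v) (h : ∀ x ∈ s, ∀ y ∈ t, x * y ∈ r) : r ∈ u * v :=
  (eventually_mul u v (· ∈ r)).2 <| mem_of_superset hs fun x hx =>
    mem_of_superset ht fun y hy => h x hx y hy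

theorem map_mul_of_mulHomClass {F : Type*} [Mul M] [Mul N] [FunLike F M N] [MulHomClass F M N]
    (f : F) (u v : Ultrafilter M) : (u * v).map f = u.map f * v.map f :=
  coe_inj.mp <| Filter.ext' fun p => by
    change (∀ᶠ x in u * v, p (f x)) ↔ ∀ᶠ y in u.map f * v.map f, p y
    simp only [eventually_mul, map_mul]
    rfl

theorem map_eq_self_of_eqOn {u : Ultrafilter M} {s : Set M} (hs : s ∈ u) {f : M → M}
    (hf : EqOn f id s) : u.map f = u :=
  coe_inj.mp <| (Filter.map_congr (eventuallyEq_of_mem hs hf)).trans Filter.map_id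

theorem exists_seq_prod_mem_of_map_eq [Monoid M] {q : Ultrafilter M} (hqq : q * q = q)
    {p : Ultrafilter N} {A : Set ι} (hA : A.Finite) {φ : ι → N → M}
    (hφ : ∀ a ∈ A, p.map (φ a) = q) {V : Set N} (hV : V ∈ p) {D : Set M} (hD : D ∈ q) :
    ∃ w : ℕ → N, (∀ n, w n ∈ V) ∧
      ∀ (k : ℕ) (l : Fin (k + 1) → ℕ) (a : Fin (k + 1) → ι), StrictMono l → (∀ i, a i ∈ A) →
        (List.ofFn fun i => φ (a i) (w (l i))).prod ∈ D := by
  have hstar : ∀ s ∈ q, s ∩ {x | {y | x * y ∈ s} ∈ q} ∈ q := fun s hs =>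
    inter_mem hs ((eventually_mul q q (· ∈ s)).1 (hqq.symm ▸ hs))
  have hstep : ∀ s ∈ q, ∃ x ∈ V, ∀ a ∈ A, φ a x ∈ s ∧ {y | φ a x * y ∈ s} ∈ q := by
    intro s hs
    have hpre : ∀ a ∈ A, s ∩ {x | {y | x * y ∈ s} ∈ q} ∈ p.map (φ a) := fun a ha => by
      rw [hφ a ha]
      exact hstar s hs
    obtain ⟨x, hxV, hx⟩ := nonempty_of_mem (inter_mem hV ((biInter_mem hA).2 hpre))
    exact ⟨x, hxV, fun a ha => mem_iInter₂.1 hx a ha⟩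
  have : Nonempty N := (nonempty_of_mem hV).to_subtype.map Subtype.val
  choose! x hxV hx using hstep
  let S : ℕ → Set M := fun n => n.rec D fun _ s => s ∩ ⋂ a ∈ A, {y | φ a (x s) * y ∈ s}
  have hS : ∀ n, S n ∈ q := by
    intro n
    induction n with
    | zero => exact hD
    | succ n ih => exact inter_mem ih ((biInter_mem hA).2 fun a ha => (hx _ ih a ha).2)
  have hSanti : Antitone S := antitone_nat_of_succ_le fun n => inter_subset_left
  refine ⟨fun n => x (S n), fun n => hxV _ (hS n), ?_⟩
  suffices h : ∀ (k : ℕ) (l : Fin (k + 1) → ℕ) (a : Fin (k + 1) → ι), StrictMono l →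
      (∀ i, a i ∈ A) → (List.ofFn fun i => φ (a i) (x (S (l i)))).prod ∈ S (l 0) from
    fun k l a hl ha => hSanti (Nat.zero_le _) (h k l a hl ha)
  intro k
  induction k with
  | zero =>
    intro l a _ ha
    simpa using (hx _ (hS (l 0)) (a 0) (ha 0)).1
  | succ k ih =>
    intro l a hl ha
    have htail := ih (fun i => l i.succ) (fun i => a i.succ) (hl.comp (Fin.strictMono_succ))
      (fun i => ha i.succ)
    have hnext : S (l 1) ⊆ S (l 0 + 1) := hSanti (hl (Fin.zero_lt_one))
    rw [List.ofFn_succ, List.prod_cons]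
    exact mem_iInter₂.1 (hnext htail).2 (a 0) (ha 0)

end Ultrafilter

namespace HJ

variable {α : Type*}

/-- Words over `A ∪ {x}`. -/
def extWords (A : Set α) : Set (FreeMonoid (Option α)) :=
  {w | ∀ a : α, some a ∈ w → a ∈ A}

def constWords (A : Set α) : Set (FreeMonoid (Option α)) :=
  {w | w ∈ extWords A ∧ none ∉ w}

def varWords (A : Set α) : Set (FreeMonoid (Option α)) :=
  {w | IsVarWord A w.toList}

def subst (a : α) : FreeMonoid (Option α) →* FreeMonoid (Option α) :=
  FreeMonoid.map fun b => some (b.getD a)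

variable {A : Set α} {u v : FreeMonoid (Option α)}

theorem mul_mem_extWords (hu : u ∈ extWords A) (hv : v ∈ extWords A) : u * v ∈ extWords A :=
  fun a ha => (FreeMonoid.mem_mul.1 ha).elim (hu a) (hv a)

theorem mul_mem_constWords (hu : u ∈ constWords A) (hv : v ∈ constWords A) :
    u * v ∈ constWords A :=
  ⟨mul_mem_extWords hu.1 hv.1, fun h => (FreeMonoid.mem_mul.1 h).elim hu.2 hv.2⟩

theorem varWords_subset_extWords : varWords A ⊆ extWords A := fun _ h => h.1

theorem mul_mem_varWords_left (hu : u ∈ extWords A) (hv : v ∈ varWords A) :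
    u * v ∈ varWords A :=
  ⟨mul_mem_extWords hu hv.1, FreeMonoid.mem_mul.2 (Or.inr hv.2)⟩

theorem mul_mem_varWords_right (hu : u ∈ varWords A) (hv : v ∈ extWords A) :
    u * v ∈ varWords A :=
  ⟨mul_mem_extWords hu.1 hv, FreeMonoid.mem_mul.2 (Or.inl hu.2)⟩

theorem subst_mem_constWords {a : α} (ha : a ∈ A) (hu : u ∈ extWords A) :
    subst a u ∈ constWords A := by
  refine ⟨fun a' h => ?_, fun h => ?_⟩ <;> obtain ⟨b, hb, hba⟩ := FreeMonoid.mem_map.1 h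
  · cases b with
    | none => exact Option.some_injective _ hba ▸ ha
    | some b => exact Option.some_injective _ hba ▸ hu b hb
  · exact Option.some_ne_none _ hba

theorem subst_eqOn_constWords (a : α) : EqOn (subst a) id (constWords A) := by
  intro u hu
  refine (List.map_congr_left fun b hb => ?_).trans (List.map_id u.toList)
  cases b with
  | none => exact absurd hb hu.2
  | some b => rfl

theorem reduceOption_toList_subst (a : α) (w : FreeMonoid (Option α)) :
    (subst a w).toList.reduceOption = substC w.toList a := by
  simp [subst, substC, List.reduceOption, List.filterMap_map]

attribute [local instance] Ultrafilter.mul Ultrafilter.semigroup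

theorem exists_ultrafilter_map_subst_eq (A : Set α) :
    ∃ p q : Ultrafilter (FreeMonoid (Option α)),
      varWords A ∈ p ∧ q * q = q ∧ ∀ a ∈ A, p.map (subst a) = q := by
  have hmul := Ultrafilter.continuous_mul_left (M := FreeMonoid (Option α))
  have hclosed := fun s : Set (FreeMonoid (Option α)) => (ultrafilter_isClosed_basic s).isCompact
  obtain ⟨q, hqC, hqq, hqmin⟩ := exists_minimal_idempotent hmul (hclosed (constWords A))
    ⟨pure 1, ⟨fun _ h => absurd h FreeMonoid.notMem_one, FreeMonoid.notMem_one⟩⟩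
    fun u hu v hv => Ultrafilter.mem_mul_of_forall_mul_mem hu hv fun _ h _ h' =>
      mul_mem_constWords h h'
  obtain ⟨p, hpV, hpp, hpq, hqp⟩ := exists_idempotent_le hmul (X := {u | extWords A ∈ u})
    (hclosed (varWords A))
    ⟨pure (FreeMonoid.of none), fun _ h => absurd (FreeMonoid.mem_of.1 h) (by simp),
      FreeMonoid.mem_of_self⟩
    (fun u hu => mem_of_superset hu varWords_subset_extWords)
    (fun u hu v hv => Ultrafilter.mem_mul_of_forall_mul_mem hu hv fun _ h _ h' =>
      mul_mem_varWords_left h h')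
    (fun u hu v hv => Ultrafilter.mem_mul_of_forall_mul_mem hu hv fun _ h _ h' =>
      mul_mem_varWords_right h h')
    (mem_of_superset hqC fun _ h => h.1) hqq
  refine ⟨p, q, hpV, hqq, fun a ha => ?_⟩
  have hfix : q.map (subst a) = q := Ultrafilter.map_eq_self_of_eqOn hqC (subst_eqOn_constWords a)
  have hmap : ∀ u v : Ultrafilter (FreeMonoid (Option α)),
      (u * v).map (subst a) = u.map (subst a) * v.map (subst a) :=
    Ultrafilter.map_mul_of_mulHomClass (subst a)
  refine hqmin _ ?_ ?_ ?_ ?_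
  · exact Ultrafilter.mem_map.2 <| mem_of_superset hpV fun _ h =>
      subst_mem_constWords ha (varWords_subset_extWords h)
  · rw [← hmap, hpp]
  · rw [← hfix, ← hmap, hpq]
  · rw [← hfix, ← hmap, hqp]

theorem reduceOption_toList_prod_subst {k : ℕ} (a : Fin k → α)
    (w : Fin k → FreeMonoid (Option α)) :
    (List.ofFn fun i => subst (a i) (w i)).prod.toList.reduceOption =
      (List.ofFn fun i => substC (w i).toList (a i)).flatten := by
  rw [FreeMonoid.toList_prod, List.reduceOption, List.filterMap_flatten, List.map_ofFn,
    List.map_ofFn]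
  congr 2
  ext1 i
  exact reduceOption_toList_subst (a i) (w i)

end HJ

open HJ in
theorem stmt0_general {α : Type*} (A : Finset α)
    (r : ℕ) (c : List α → Fin r) :
    ∃ t : ℕ → List (Option α),
      (∀ n, IsVarWord (A : Set α) (t n)) ∧
      ∃ col : Fin r,
        ∀ (n : ℕ) (m : Fin (n + 1) → ℕ) (a : Fin (n + 1) → α),
          StrictMono m → (∀ j, a j ∈ A) →
          c ((List.ofFn fun j => substC (t (m j)) (a j)).flatten) = col := by
  obtain ⟨p, q, hpV, hqq, hpq⟩ := exists_ultrafilter_map_subst_eq (A : Set α)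
  let c' : FreeMonoid (Option α) → Fin r := fun w => c w.toList.reduceOption
  obtain ⟨col, hcol⟩ : ∃ col, ∀ᶠ w in q, c' w = col :=
    Ultrafilter.eventually_exists_iff.1 (Eventually.of_forall fun w => ⟨c' w, rfl⟩)
  obtain ⟨w, hwV, hw⟩ := Ultrafilter.exists_seq_prod_mem_of_map_eq hqq A.finite_toSet
    hpq hpV hcol
  refine ⟨fun n => (w n).toList, hwV, col, fun n m a hm ha => ?_⟩
  rw [← reduceOption_toList_prod_subst]
  exact hw n m a hm ha

open HJ in
/-- **Carlson / Furstenberg–Katznelson.** For every finite nonempty alphabet `A` and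
every finite coloring of the words over `A` there is a sequence of variable words
all of whose ordered substitution-concatenations get the same color. -/
theorem stmt0 {α : Type*} (A : Finset α) (hA : A.Nonempty)
    (r : ℕ) (hr : 1 ≤ r) (c : List α → Fin r) :
    ∃ t : ℕ → List (Option α),
      (∀ n, IsVarWord (A : Set α) (t n)) ∧
      ∃ col : Fin r,
        ∀ (n : ℕ) (m : Fin (n + 1) → ℕ) (a : Fin (n + 1) → α),
          StrictMono m → (∀ j, a j ∈ A) →
          c ((List.ofFn fun j => substC (t (m j)) (a j)).flatten) = col :=
  stmt0_general A r c
end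

section
/- Let A be a finite nonempty alphabet, E ⊆ W(A), and 𝐬 an infinite sequence of variable words over A such that E is large in 𝐬. If r ≥ 2 and E = E_1 ∪ ⋯ ∪ E_r, then there exist 1 ≤ i ≤ r and an infinite extracted subsequence 𝐭 of 𝐬 such that E_i is large in 𝐭. -/
/-! Passing to an extracted subsequence is transitive and shrinks the constant span: substituting,
into a word of the span of `u`, for each `u j` its expression as a word of the variable span of
the `j`-th block of `s` gives a word of the corresponding span of `s`. Hence if `E ∪ F` is large
in `s` and `E` is not, some `t ≤ s` has a constant span disjoint from `E`, and `F` is large in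
`t`, because every `w ≤ t` also satisfies `w ≤ s`. Induction on the number of pieces
finishes. -/

namespace HJ

variable {α β : Type*}

/-- Common form of `substC` (`ι = id`) and `substV` (`ι = some`), so that the constant and the
variable span can be handled at once. -/
def substWith (ι : α → β) (v : List (Option α)) (c : β) : List β :=
  v.map fun d => d.elim c ι

lemma substC_eq_substWith (v : List (Option α)) (a : α) : substC v a = substWith id v a := by
  refine List.map_congr_left fun d _ => ?_
  cases d <;> rfl

lemma substV_eq_substWith (v : List (Option α)) (b : Option α) :
    substV v b = substWith some v b := rfl

lemma substV_none (v : List (Option α)) : substV v none = v := by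
  conv_rhs => rw [← List.map_id v]
  refine List.map_congr_left fun d _ => ?_
  cases d <;> rfl

lemma substWith_substWith_some (ι : α → β) (v : List (Option α)) (b : Option α) (c : β) :
    substWith ι (substWith some v b) c = substWith ι v (b.elim c ι) := by
  simp only [substWith, List.map_map]
  refine List.map_congr_left fun d _ => ?_
  cases d <;> rfl

lemma substWith_flatMap {γ : Type*} (ι : α → β) (L : List γ) (f : γ → List (Option α))
    (c : β) :
    substWith ι (L.flatMap f) c = L.flatMap fun x => substWith ι (f x) c := by
  simp only [substWith, List.map_flatMap]

/-- The spans of the definitions above, with indices and letters packed into one list of pairs,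
so that composing spans becomes a `flatMap`. -/
def listSpan (ι : α → β) (K : Set β) (s : ℕ → List (Option α)) (I : Set ℕ) :
    Set (List β) :=
  { w | ∃ p : List (ℕ × β), p ≠ [] ∧ p.Pairwise (fun q q' => q.1 < q'.1) ∧
      (∀ q ∈ p, q.1 ∈ I ∧ q.2 ∈ K) ∧ w = p.flatMap fun q => substWith ι (s q.1) q.2 }

lemma mem_listSpan_iff {ι : α → β} {K : Set β} {s : ℕ → List (Option α)} {I : Set ℕ}
    {w : List β} :
    w ∈ listSpan ι K s I ↔ ∃ (n : ℕ) (l : Fin (n + 1) → ℕ) (c : Fin (n + 1) → β),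
      StrictMono l ∧ (∀ i, l i ∈ I) ∧ (∀ i, c i ∈ K) ∧
      w = (List.ofFn fun i => substWith ι (s (l i)) (c i)).flatten := by
  constructor
  · rintro ⟨p, hne, hpair, hmem, rfl⟩
    obtain ⟨q₀, p, rfl⟩ := List.exists_cons_of_ne_nil hne
    have hmem' (i : Fin (p.length + 1)) := hmem _ ((q₀ :: p).get_mem i)
    refine ⟨p.length, fun i => ((q₀ :: p).get i).1, fun i => ((q₀ :: p).get i).2,
      fun i j hij => List.pairwise_iff_get.1 hpair i j hij, fun i => (hmem' i).1,
      fun i => (hmem' i).2, ?_⟩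
    conv_lhs => rw [List.flatMap_def, ← List.ofFn_get (q₀ :: p), List.map_ofFn]
    rfl
  · rintro ⟨n, l, c, hmono, hI, hK, rfl⟩
    refine ⟨List.ofFn fun i => (l i, c i), by simp, List.pairwise_ofFn.2 fun i j hij => hmono hij,
      ?_, by rw [List.flatMap_def, List.map_ofFn]; rfl⟩
    simp only [List.mem_ofFn]
    rintro _ ⟨i, rfl⟩
    exact ⟨hI i, hK i⟩

/-- The alphabet `C ∪ {x}`. -/
def withVar (C : Set α) : Set (Option α) :=
  { b | ∀ a, b = some a → a ∈ C }

lemma constSpan_eq_listSpan (C : Set α) (s : ℕ → List (Option α)) (I : Set ℕ) :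
    constSpan (fun _ => C) s I = listSpan id C s I := by
  ext w
  simp only [constSpan, Set.mem_ofPred_eq, mem_listSpan_iff, substC_eq_substWith]

lemma varSpan_eq_listSpan (C : Set α) (s : ℕ → List (Option α)) (I : Set ℕ) :
    varSpan (fun _ => C) s I = listSpan some (withVar C) s I ∩ {w | none ∈ w} := by
  ext w
  simp only [varSpan, Set.mem_inter_iff, Set.mem_ofPred_eq, mem_listSpan_iff, withVar,
    substV_eq_substWith]
  constructor
  · rintro ⟨n, l, b, hl, hI, hb, hw, rfl⟩
    exact ⟨⟨n, l, b, hl, hI, hb, rfl⟩, hw⟩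
  · rintro ⟨⟨n, l, b, hl, hI, hb, rfl⟩, hw⟩
    exact ⟨n, l, b, hl, hI, hb, hw, rfl⟩

/-- Each `u j` is expanded over the `j`-th block `[k j, k (j + 1))` of `s`; as `k` is monotone,
the expanded index lists still increase. -/
lemma mem_listSpan_of_blocks {ι : α → β} {K : Set β} {K' : Set (Option α)}
    (hK : ∀ b ∈ K', ∀ c ∈ K, b.elim c ι ∈ K) {s u : ℕ → List (Option α)}
    {k : ℕ → ℕ} (hk : Monotone k) {I J : Set ℕ}
    (hJI : ∀ j ∈ J, Set.Ico (k j) (k (j + 1)) ⊆ I)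
    (hu : ∀ j ∈ J, u j ∈ listSpan some K' s (Set.Ico (k j) (k (j + 1))))
    {w : List β} (hw : w ∈ listSpan ι K u J) : w ∈ listSpan ι K s I := by
  obtain ⟨p, hne, hpair, hmem, rfl⟩ := hw
  choose! P hPne hPpair hPmem hPu using hu
  set F : ℕ × β → List (ℕ × β) := fun q => (P q.1).map fun r => (r.1, r.2.elim q.2 ι)
  have hF (q) (hq : q ∈ p) (r') (hr' : r' ∈ F q) :
      r'.1 ∈ Set.Ico (k q.1) (k (q.1 + 1)) ∧ r'.2 ∈ K := by
    obtain ⟨r, hr, rfl⟩ := List.mem_map.1 hr'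
    have hr := hPmem _ (hmem q hq).1 r hr
    exact ⟨hr.1, hK _ hr.2 _ (hmem q hq).2⟩
  refine ⟨p.flatMap F, ?_, ?_, ?_, ?_⟩
  · obtain ⟨q, hq⟩ := List.exists_mem_of_ne_nil p hne
    rw [Ne, List.flatMap_eq_nil_iff]
    exact fun h => hPne _ (hmem q hq).1 (List.map_eq_nil_iff.1 (h q hq))
  · refine List.pairwise_flatMap.2 ⟨fun q hq => ?_, hpair.imp_of_mem ?_⟩
    · exact List.pairwise_map.2 (hPpair _ (hmem q hq).1)
    · intro q q' hq hq' hlt r hr r' hr'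
      have : k (q.1 + 1) ≤ k q'.1 := hk hlt
      have := (hF q hq r hr).1.2
      have := (hF q' hq' r' hr').1.1
      omega
  · intro r hr
    obtain ⟨q, hq, hr⟩ := List.mem_flatMap.1 hr
    exact ⟨hJI _ (hmem q hq).1 (hF q hq r hr).1, (hF q hq r hr).2⟩
  · rw [List.flatMap_assoc]
    refine List.flatMap_congr fun q hq => ?_
    rw [hPu _ (hmem q hq).1, substWith_flatMap, List.flatMap_map]
    simp only [substWith_substWith_some]

section Extracted

variable {C : Set α} {s t u : ℕ → List (Option α)}

lemma elim_some_mem_withVar {b c : Option α} (hb : b ∈ withVar C) (hc : c ∈ withVar C) :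
    b.elim c some ∈ withVar C := by
  cases b
  exacts [hc, hb]

lemma elim_id_mem_of_mem_withVar {b : Option α} {a : α} (hb : b ∈ withVar C) (ha : a ∈ C) :
    b.elim a id ∈ C := by
  cases b
  exacts [ha, hb _ rfl]

theorem Extracted.refl (hs : ∀ n, none ∈ s n) : Extracted (fun _ => C) s s := fun _ =>
  ⟨id, rfl, strictMono_id, fun i _ => ⟨0, fun _ => i, fun _ => none,
    Subsingleton.strictMono (α := Fin 1) _, fun _ => ⟨le_rfl, i.lt_succ_self⟩,
    fun _ _ h => (Option.some_ne_none _ h.symm).elim, hs i,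
    by simp [substV_none]⟩⟩

theorem Extracted.none_mem {B : ℕ → Set α} (h : Extracted B s t) (n : ℕ) : none ∈ t n := by
  obtain ⟨m, -, -, hm⟩ := h n
  obtain ⟨_, _, _, -, -, -, hnone, -⟩ := hm n le_rfl
  exact hnone

theorem Extracted.trans (hsu : Extracted (fun _ => C) s u) (hut : Extracted (fun _ => C) u t) :
    Extracted (fun _ => C) s t := by
  intro l
  obtain ⟨m, hm0, hm, hmt⟩ := hut l
  obtain ⟨k, hk0, hk, hku⟩ := hsu (m (l + 1))
  refine ⟨k ∘ m, by simp [hm0, hk0], hk.comp hm, fun i hi => ?_⟩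
  simp only [varSpan_eq_listSpan] at hmt hku ⊢
  refine ⟨mem_listSpan_of_blocks (fun _ hb _ hc => elim_some_mem_withVar hb hc) hk.monotone
    (fun j hj => Set.Ico_subset_Ico (hk.monotone hj.1) (hk.monotone hj.2))
    (fun j hj => (hku j ?_).1) (hmt i hi).1, (hmt i hi).2⟩
  have : m (i + 1) ≤ m (l + 1) := hm.monotone (by omega)
  exact (hj.2.trans_le this).le

theorem Extracted.constSpan_subset (h : Extracted (fun _ => C) s t) :
    constSpan (fun _ => C) t Set.univ ⊆ constSpan (fun _ => C) s Set.univ := by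
  intro w hw
  rw [constSpan_eq_listSpan] at hw ⊢
  obtain ⟨p, hne, hpair, hmem, rfl⟩ := hw
  obtain ⟨b, hb⟩ : ∃ b, ∀ q ∈ p, q.1 < b :=
    ⟨(p.map Prod.fst).sum + 1, fun q hq =>
      Nat.lt_succ_of_le (List.le_sum_of_mem (List.mem_map_of_mem hq))⟩
  obtain ⟨m, -, hm, hmt⟩ := h b
  simp only [varSpan_eq_listSpan] at hmt
  exact mem_listSpan_of_blocks (J := Set.Iio b)
    (fun _ hb _ ha => elim_id_mem_of_mem_withVar hb ha) hm.monotone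
    (fun _ _ => Set.subset_univ _) (fun j hj => (hmt j (Set.mem_Iio.1 hj).le).1)
    ⟨p, hne, hpair, fun q hq => ⟨hb q hq, (hmem q hq).2⟩, rfl⟩

end Extracted

section IsLarge

variable {C : Set α} {s : ℕ → List (Option α)}

theorem not_isLarge_empty (hs : ∀ n, none ∈ s n) : ¬IsLarge (fun _ => C) ∅ s := fun h => by
  simpa using h s (.refl hs)

theorem IsLarge.or_exists_extracted_of_union {E F : Set (List α)}
    (h : IsLarge (fun _ => C) (E ∪ F) s) :
    IsLarge (fun _ => C) E s ∨
      ∃ t, Extracted (fun _ => C) s t ∧ IsLarge (fun _ => C) F t := by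
  refine or_iff_not_imp_left.2 fun hE => ?_
  obtain ⟨t, hst, hEt⟩ : ∃ t, Extracted (fun _ => C) s t ∧
      ¬(E ∩ constSpan (fun _ => C) t Set.univ).Nonempty := by
    simpa [IsLarge] using hE
  refine ⟨t, hst, fun w htw => ?_⟩
  obtain ⟨z, hz | hz, hzw⟩ := h w (hst.trans htw)
  · exact (hEt ⟨z, hz, htw.constSpan_subset hzw⟩).elim
  · exact ⟨z, hz, hzw⟩

theorem IsLarge.exists_extracted_of_biUnion {ι : Type*} {E : ι → Set (List α)} (S : Finset ι)
    (hs : ∀ n, none ∈ s n) (h : IsLarge (fun _ => C) (⋃ i ∈ S, E i) s) :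
    ∃ i ∈ S, ∃ t, Extracted (fun _ => C) s t ∧ IsLarge (fun _ => C) (E i) t := by
  classical
  induction S using Finset.induction_on generalizing s with
  | empty => exact (not_isLarge_empty hs (by simpa using h)).elim
  | insert a S _ ih =>
    rw [Finset.set_biUnion_insert] at h
    rcases h.or_exists_extracted_of_union with ha | ⟨t, hst, ht⟩
    · exact ⟨a, Finset.mem_insert_self a S, s, .refl hs, ha⟩
    · obtain ⟨i, hi, t', htt', ht'⟩ := ih hst.none_mem ht
      exact ⟨i, Finset.mem_insert_of_mem hi, t', hst.trans htt', ht'⟩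

end IsLarge

end HJ

open HJ in
theorem stmt4_general {α : Type*} (A : Finset α)
    (E : Set (List α))
    (s : ℕ → List (Option α)) (hs : ∀ n, IsVarWord (A : Set α) (s n))
    (hlarge : IsLarge (fun _ => (A : Set α)) E s)
    (r : ℕ) (E' : Fin r → Set (List α)) (hE' : E = ⋃ i, E' i) :
    ∃ (i : Fin r) (t : ℕ → List (Option α)),
      Extracted (fun _ => (A : Set α)) s t ∧
      IsLarge (fun _ => (A : Set α)) (E' i) t := by
  obtain ⟨i, -, t, hst, ht⟩ := IsLarge.exists_extracted_of_biUnion (E := E') Finset.univ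
    (fun n => (hs n).2) (by simpa [hE'] using hlarge)
  exact ⟨i, t, hst, ht⟩

open HJ in
/-- If a large set is partitioned into finitely many pieces, some piece is large
in some extracted subsequence. -/
theorem stmt4 {α : Type*} (A : Finset α) (hA : A.Nonempty)
    (E : Set (List α)) (hE : E ⊆ WordsOver (A : Set α))
    (s : ℕ → List (Option α)) (hs : ∀ n, IsVarWord (A : Set α) (s n))
    (hlarge : IsLarge (fun _ => (A : Set α)) E s)
    (r : ℕ) (hr : 2 ≤ r) (E' : Fin r → Set (List α)) (hE' : E = ⋃ i, E' i) :
    ∃ (i : Fin r) (t : ℕ → List (Option α)),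
      Extracted (fun _ => (A : Set α)) s t ∧
      IsLarge (fun _ => (A : Set α)) (E' i) t :=
  stmt4_general A E s hs hlarge r E' hE'
end
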